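/- For every α ∈ (0,1), neither Ω⁺ nor Ω⁻ is quasiconvex: for every constant K ≥ 1 there exist points x, y in the domain such that every rectifiable curve joining x to y inside the domain has length greater than K·|x − y|. -/

import Mathlib

/-!
Over a gap `(t, 2t)` of the Cantor set, `t = 3⁻¹ ^ (k + 1)`, the graph of `ψ` vanishes at the
Cantor points `t`, `2t` and rises to height `h = (t / 2) ^ α` at the midpoint; since `α < 1`,
`h / t → ∞` as `k → ∞`. In `Ω⁺` the points `(t, h / 2)` and `(2t, h / 2)` are `t` apart, but a
path joining them must pass above the peak over `3t / 2`. In `Ω⁻` the points at height `h / 2` over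
the midpoints of the gaps `(t, 2t)` and `(3t, 6t)` are `3t` apart, but a path joining them must dip
below `0` over the Cantor point `3t`. Either way the path has length at least `h`, which beats
`K` times the distance once `k` is large.
-/

open MeasureTheory Set Metric Filter Topology
open scoped ENNReal NNReal

noncomputable section

/-- The cusp function `ψ(x) = dist(x, C)^α` on `(0,1)`, zero elsewhere; here `C = cantorSet`
is Mathlib's classical ternary Cantor set. -/
def psiC (α : ℝ) (x : ℝ) : ℝ :=
  if x ∈ Ioo (0 : ℝ) 1 then infDist x cantorSet ^ α else 0

/-- The domain above the Cantor-cuspidal graph. -/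
def OmegaPlus (α : ℝ) : Set (ℝ × ℝ) := {x | psiC α x.1 < x.2}

/-- The domain below the Cantor-cuspidal graph. -/
def OmegaMinus (α : ℝ) : Set (ℝ × ℝ) := {x | x.2 < psiC α x.1}

/-- The Cantor-cuspidal graph `Γ`. -/
def graphC (α : ℝ) : Set (ℝ × ℝ) := {x | x.2 = psiC α x.1}

/-- The domain `Ω ⊂ ℝ²` is not quasiconvex: for every `K ≥ 1` there are points
`x, y ∈ Ω` such that every curve joining `x` to `y` inside `Ω` has length (total
variation) greater than `K * dist x y`. -/
def NotQuasiconvex (Ω : Set (ℝ × ℝ)) : Prop :=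
  ∀ K : ℝ, 1 ≤ K → ∃ x ∈ Ω, ∃ y ∈ Ω,
    ∀ γ : ℝ → ℝ × ℝ, ContinuousOn γ (Icc 0 1) → γ 0 = x → γ 1 = y →
      γ '' Icc 0 1 ⊆ Ω → ENNReal.ofReal (K * dist x y) < eVariationOn γ (Icc 0 1)

lemma one_mem_cantorSet : (1 : ℝ) ∈ cantorSet :=
  mem_iInter.2 fun n => by
    induction n with
    | zero => simp
    | succ n ih => exact Or.inr ⟨1, ih, by norm_num⟩

lemma div_three_mem_cantorSet {x : ℝ} (hx : x ∈ cantorSet) : x / 3 ∈ cantorSet := by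
  rw [cantorSet_eq_union_halves]
  exact Or.inl ⟨x, hx, rfl⟩

lemma two_add_div_three_mem_cantorSet {x : ℝ} (hx : x ∈ cantorSet) :
    (2 + x) / 3 ∈ cantorSet := by
  rw [cantorSet_eq_union_halves]
  exact Or.inr ⟨x, hx, rfl⟩

lemma three_mul_mem_cantorSet {x : ℝ} (hx : x ∈ cantorSet) (h : x ≤ 1 / 3) :
    3 * x ∈ cantorSet := by
  have := cantorStep_mem_cantorSet hx
  rwa [cantorStep, if_pos ⟨(cantorSet_subset_unitInterval hx).1, h⟩] at this

lemma le_or_ge_of_mem_cantorSet {x : ℝ} (hx : x ∈ cantorSet) : x ≤ 1 / 3 ∨ 2 / 3 ≤ x := by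
  rw [cantorSet_eq_union_halves] at hx
  rcases hx with ⟨y, hy, rfl⟩ | ⟨y, hy, rfl⟩ <;>
    have := cantorSet_subset_unitInterval hy
  · exact Or.inl (by linarith [this.2])
  · exact Or.inr (by linarith [this.1])

lemma pow_inv_three_mem_cantorSet (k : ℕ) : (3⁻¹ : ℝ) ^ k ∈ cantorSet := by
  induction k with
  | zero => simpa using one_mem_cantorSet
  | succ k ih => simpa [pow_succ, div_eq_mul_inv] using div_three_mem_cantorSet ih

lemma two_mul_pow_inv_three_mem_cantorSet (k : ℕ) : 2 * (3⁻¹ : ℝ) ^ (k + 1) ∈ cantorSet := by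
  induction k with
  | zero => simpa [div_eq_mul_inv] using two_add_div_three_mem_cantorSet zero_mem_cantorSet
  | succ k ih =>
    simpa [pow_succ _ (k + 1), div_eq_mul_inv, mul_assoc] using div_three_mem_cantorSet ih

lemma disjoint_Ioo_pow_inv_three_cantorSet (k : ℕ) :
    Disjoint (Ioo ((3⁻¹ : ℝ) ^ (k + 1)) (2 * 3⁻¹ ^ (k + 1))) cantorSet := by
  induction k with
  | zero =>
    refine disjoint_left.2 fun x hx hC => ?_
    rcases le_or_ge_of_mem_cantorSet hC with h | h <;> norm_num at hx <;> linarith [hx.1, hx.2]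
  | succ k ih =>
    refine disjoint_left.2 fun x hx hC => ?_
    have hpow : (3⁻¹ : ℝ) ^ (k + 1 + 1) = 3⁻¹ ^ (k + 1) / 3 := by rw [pow_succ]; ring
    have hsmall : (3⁻¹ : ℝ) ^ (k + 1) ≤ 3⁻¹ :=
      pow_le_of_le_one (by norm_num) (by norm_num) (by omega)
    rw [hpow] at hx
    refine disjoint_left.1 ih ⟨?_, ?_⟩ (three_mul_mem_cantorSet hC ?_) <;>
      linarith [hx.1, hx.2]

lemma infDist_midpoint_of_gap {s : Set ℝ} {a b : ℝ} (ha : a ∈ s) (hab : a ≤ b)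
    (hgap : Disjoint (Ioo a b) s) : infDist ((a + b) / 2) s = (b - a) / 2 := by
  refine le_antisymm ?_ ((le_infDist ⟨a, ha⟩).2 fun y hy => ?_)
  · calc infDist ((a + b) / 2) s ≤ dist ((a + b) / 2) a := infDist_le_dist_of_mem ha
      _ = (b - a) / 2 := by rw [Real.dist_eq, abs_of_nonneg (by linarith)]; ring
  · have hy' : y ≤ a ∨ b ≤ y := by
      by_contra! h
      exact disjoint_right.1 hgap hy h
    rw [Real.dist_eq]
    rcases hy' with h | h
    · exact le_abs.2 (Or.inl (by linarith))
    · exact le_abs.2 (Or.inr (by linarith))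

lemma psiC_of_mem_cantorSet {α x : ℝ} (hα : α ≠ 0) (hx : x ∈ cantorSet) : psiC α x = 0 := by
  simp [psiC, infDist_zero_of_mem hx, Real.zero_rpow hα]

lemma psiC_midpoint_of_gap (α : ℝ) {a b : ℝ} (ha : a ∈ cantorSet) (hb : b ∈ cantorSet)
    (hab : a < b) (hgap : Disjoint (Ioo a b) cantorSet) :
    psiC α ((a + b) / 2) = ((b - a) / 2) ^ α := by
  have hmid : (a + b) / 2 ∈ Ioo (0 : ℝ) 1 := by
    constructor <;>
      linarith [(cantorSet_subset_unitInterval ha).1, (cantorSet_subset_unitInterval hb).2]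
  rw [psiC, if_pos hmid, infDist_midpoint_of_gap ha hab.le hgap]

lemma psiC_three_halves_mul_pow_inv_three (α : ℝ) (k : ℕ) :
    psiC α (3 / 2 * 3⁻¹ ^ (k + 1)) = (3⁻¹ ^ (k + 1) / 2) ^ α := by
  have h := psiC_midpoint_of_gap α (pow_inv_three_mem_cantorSet (k + 1))
    (two_mul_pow_inv_three_mem_cantorSet k)
    (by linarith [show (0 : ℝ) < 3⁻¹ ^ (k + 1) by positivity])
    (disjoint_Ioo_pow_inv_three_cantorSet k)
  convert h using 2 <;> ring

lemma edist_add_edist_le_eVariationOn {α E : Type*} [LinearOrder α] [PseudoEMetricSpace E]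
    (f : α → E) {a b c : α} (hab : a ≤ b) (hbc : b ≤ c) :
    edist (f a) (f b) + edist (f b) (f c) ≤ eVariationOn f (Icc a c) := by
  have h := eVariationOn.Icc_add_Icc f hab hbc (mem_univ b)
  simp only [univ_inter] at h
  rw [← h]
  exact add_le_add (eVariationOn.edist_le f (left_mem_Icc.2 hab) (right_mem_Icc.2 hab))
    (eVariationOn.edist_le f (left_mem_Icc.2 hbc) (right_mem_Icc.2 hbc))

lemma ofReal_abs_sub_snd_le_edist {α : Type*} [PseudoEMetricSpace α] (p q : α × ℝ) :
    ENNReal.ofReal |p.2 - q.2| ≤ edist p q := by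
  rw [← Real.dist_eq, ← edist_dist, Prod.edist_eq]
  exact le_max_right _ _

lemma two_mul_le_eVariationOn_of_crossing {γ : ℝ → ℝ × ℝ} (hγ : ContinuousOn γ (Icc 0 1))
    {c a b : ℝ} (h₀ : (γ 0).1 ≤ c) (h₁ : c ≤ (γ 1).1) (ha₀ : (γ 0).2 = a) (ha₁ : (γ 1).2 = a)
    (hb : ∀ s ∈ Icc (0 : ℝ) 1, (γ s).1 = c → b ≤ |(γ s).2 - a|) :
    2 * ENNReal.ofReal b ≤ eVariationOn γ (Icc 0 1) := by
  obtain ⟨s, hs, hsc⟩ := intermediate_value_Icc zero_le_one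
    (continuous_fst.comp_continuousOn hγ) ⟨h₀, h₁⟩
  have hbs : ENNReal.ofReal b ≤ ENNReal.ofReal |(γ s).2 - a| :=
    ENNReal.ofReal_le_ofReal (hb s hs hsc)
  calc 2 * ENNReal.ofReal b = ENNReal.ofReal b + ENNReal.ofReal b := two_mul _
    _ ≤ edist (γ 0) (γ s) + edist (γ s) (γ 1) := by
      gcongr
      · rw [edist_comm]
        exact hbs.trans (ha₀ ▸ ofReal_abs_sub_snd_le_edist _ _)
      · exact hbs.trans (ha₁ ▸ ofReal_abs_sub_snd_le_edist _ _)
    _ ≤ eVariationOn γ (Icc 0 1) := edist_add_edist_le_eVariationOn γ hs.1 hs.2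

lemma notQuasiconvex_of_barrier {Ω : Set (ℝ × ℝ)}
    (h : ∀ K : ℝ, 1 ≤ K → ∃ x₁ y₁ c a b : ℝ, (x₁, a) ∈ Ω ∧ (y₁, a) ∈ Ω ∧ x₁ ≤ c ∧ c ≤ y₁ ∧
      K * (y₁ - x₁) < 2 * b ∧ ∀ p ∈ Ω, p.1 = c → b ≤ |p.2 - a|) :
    NotQuasiconvex Ω := by
  intro K hK
  obtain ⟨x₁, y₁, c, a, b, hx, hy, hxc, hcy, hKb, hbarrier⟩ := h K hK
  refine ⟨_, hx, _, hy, fun γ hγ hγ₀ hγ₁ hγΩ => ?_⟩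
  have hdist : dist (x₁, a) (y₁, a) = y₁ - x₁ := by
    simp [Prod.dist_eq, Real.dist_eq, abs_of_nonpos (sub_nonpos.2 (hxc.trans hcy)), hxc.trans hcy]
  have hvar := two_mul_le_eVariationOn_of_crossing hγ (c := c) (a := a) (b := b)
    (by simpa [hγ₀]) (by simpa [hγ₁]) (by simp [hγ₀]) (by simp [hγ₁])
    fun s hs hsc => hbarrier _ (hγΩ (mem_image_of_mem γ hs)) hsc
  refine lt_of_lt_of_le ?_ hvar
  rw [hdist, ← ENNReal.ofReal_ofNat 2, ← ENNReal.ofReal_mul zero_le_two,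
    ENNReal.ofReal_lt_ofReal_iff_of_nonneg (by nlinarith)]
  exact hKb

lemma eventually_mul_lt_rpow {α : ℝ} (hα : α < 1) (C : ℝ) :
    ∀ᶠ r in 𝓝[>] (0 : ℝ), C * r < r ^ α := by
  have hlim : Tendsto (fun r : ℝ => C * r ^ (1 - α)) (𝓝[>] 0) (𝓝 0) := by
    have := ((Real.continuousAt_rpow_const 0 (1 - α) (Or.inr (by linarith))).tendsto).const_mul C
    rw [Real.zero_rpow (by linarith), mul_zero] at this
    exact tendsto_nhdsWithin_of_tendsto_nhds this
  filter_upwards [hlim.eventually (gt_mem_nhds one_pos), self_mem_nhdsWithin] with r hr hr₀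
  calc C * r = C * r ^ (1 - α) * r ^ α := by
        rw [mul_assoc, ← Real.rpow_add hr₀, sub_add_cancel, Real.rpow_one]
    _ < 1 * r ^ α := by gcongr; exact Real.rpow_pos_of_pos hr₀ α
    _ = r ^ α := one_mul _

lemma eventually_mul_half_pow_inv_three_lt_rpow {α : ℝ} (hα : α < 1) (C : ℝ) :
    ∀ᶠ k : ℕ in atTop, C * ((3⁻¹ : ℝ) ^ k / 2) < ((3⁻¹ : ℝ) ^ k / 2) ^ α := by
  have hlim : Tendsto (fun k : ℕ => (3⁻¹ : ℝ) ^ k / 2) atTop (𝓝[>] 0) := by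
    refine tendsto_nhdsWithin_iff.2 ⟨?_, Eventually.of_forall fun k => mem_Ioi.2 (by positivity)⟩
    simpa using (tendsto_pow_atTop_nhds_zero_of_lt_one (by norm_num : (0 : ℝ) ≤ 3⁻¹)
      (by norm_num)).div_const 2
  exact hlim.eventually (eventually_mul_lt_rpow hα C)

lemma notQuasiconvex_omegaPlus {α : ℝ} (hα₀ : 0 < α) (hα₁ : α < 1) :
    NotQuasiconvex (OmegaPlus α) := by
  refine notQuasiconvex_of_barrier fun K _ => ?_
  obtain ⟨N, hN⟩ := eventually_atTop.1 (eventually_mul_half_pow_inv_three_lt_rpow hα₁ (2 * K))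
  have hKt := hN (N + 1) (by omega)
  set t : ℝ := 3⁻¹ ^ (N + 1)
  set h : ℝ := (t / 2) ^ α
  have hψ : psiC α (3 / 2 * t) = h := psiC_three_halves_mul_pow_inv_three α N
  have hψ₀ {x : ℝ} (hx : x ∈ cantorSet) : psiC α x = 0 := psiC_of_mem_cantorSet hα₀.ne' hx
  refine ⟨t, 2 * t, 3 / 2 * t, h / 2, h / 2, ?_, ?_, ?_, ?_, ?_, fun p hp hpc => ?_⟩
  · show psiC α t < h / 2
    rw [hψ₀ (pow_inv_three_mem_cantorSet _)]; positivity
  · show psiC α (2 * t) < h / 2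
    rw [hψ₀ (two_mul_pow_inv_three_mem_cantorSet _)]; positivity
  · linarith [show 0 < t by positivity]
  · linarith [show 0 < t by positivity]
  · linarith
  · have hp' : h < p.2 := by rw [← hψ, ← hpc]; exact hp
    exact le_abs.2 (Or.inl (by linarith))

lemma notQuasiconvex_omegaMinus {α : ℝ} (hα₀ : 0 < α) (hα₁ : α < 1) :
    NotQuasiconvex (OmegaMinus α) := by
  refine notQuasiconvex_of_barrier fun K _ => ?_
  obtain ⟨N, hN⟩ := eventually_atTop.1 (eventually_mul_half_pow_inv_three_lt_rpow hα₁ (6 * K))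
  have hKt := hN (N + 2) (by omega)
  set s : ℝ := 3⁻¹ ^ (N + 1)
  set t : ℝ := 3⁻¹ ^ (N + 2)
  have hst : s = 3 * t := by simp only [s, t, pow_succ]; ring
  set h : ℝ := (t / 2) ^ α
  have hh : 0 < h := by positivity
  have hψt : psiC α (3 / 2 * t) = h := psiC_three_halves_mul_pow_inv_three α (N + 1)
  have hψs : h ≤ psiC α (3 / 2 * s) := by
    rw [psiC_three_halves_mul_pow_inv_three α N]
    change h ≤ (s / 2) ^ α
    exact Real.rpow_le_rpow (by positivity) (by linarith [show 0 < t by positivity]) hα₀.le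
  have hψ₀ : psiC α s = 0 := psiC_of_mem_cantorSet hα₀.ne' (pow_inv_three_mem_cantorSet _)
  refine ⟨3 / 2 * t, 3 / 2 * s, s, h / 2, h / 2, ?_, ?_, ?_, ?_, ?_, fun p hp hpc => ?_⟩
  · show h / 2 < psiC α (3 / 2 * t)
    linarith
  · show h / 2 < psiC α (3 / 2 * s)
    linarith
  · linarith [show 0 < t by positivity]
  · linarith [show 0 < t by positivity]
  · rw [hst]; linarith
  · have hp' : p.2 < 0 := by rw [← hψ₀, ← hpc]; exact hp
    exact le_abs.2 (Or.inr (by linarith))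

/-- Neither `Ω⁺` nor `Ω⁻` is quasiconvex. -/
theorem omega_not_quasiconvex (α : ℝ) (hα₀ : 0 < α) (hα₁ : α < 1) :
    NotQuasiconvex (OmegaPlus α) ∧ NotQuasiconvex (OmegaMinus α) :=
  ⟨notQuasiconvex_omegaPlus hα₀ hα₁, notQuasiconvex_omegaMinus hα₀ hα₁⟩
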